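/- arXiv:2105.02614 — 4 statements merged into one kernel-verified Lean document; each statement's English description precedes it below -/
import Mathlib

section
/- Let E be a real Banach space and E₀ a closed subspace of E. Then E₀ is an M-ideal in E if and only if E₀ has the 3-ball property in E: for every x in the closed unit ball of E, every y₁, y₂, y₃ in the closed unit ball of E₀ and every ε > 0 there exists y ∈ E₀ such that ‖x + yᵢ − y‖ ≤ 1 + ε for i = 1, 2, 3. -/
/-- A subset `E₀` of a Banach space `E` is an *M-ideal* in `E` if there is a bounded linear
projection `P` on the dual `E*` whose kernel is the annihilator of `E₀` and which satisfies
`‖φ‖ = ‖P φ‖ + ‖φ - P φ‖` for every `φ ∈ E*`. -/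
def IsMIdeal {E : Type*} [NormedAddCommGroup E] [NormedSpace ℝ E] (E₀ : Set E) : Prop :=
  ∃ P : (E →L[ℝ] ℝ) →L[ℝ] (E →L[ℝ] ℝ),
    (∀ φ, P (P φ) = P φ) ∧
    (∀ φ, P φ = 0 ↔ ∀ y ∈ E₀, φ y = 0) ∧
    (∀ φ, ‖φ‖ = ‖P φ‖ + ‖φ - P φ‖)

/-!
If `E₀` is an M-ideal with M-projection `P` and no `y ∈ E₀` fits, Hahn–Banach separation of a ball
in the sup-normed product `E³` produces functionals `φᵢ` whose sum annihilates `E₀` and with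
`∑ φᵢ (x + yᵢ) > ∑ ‖φᵢ‖`; but writing `φᵢ = (φᵢ - P φᵢ) + P φᵢ`, the terms `P φᵢ x` cancel and
`‖φᵢ‖ = ‖φᵢ - P φᵢ‖ + ‖P φᵢ‖` gives the opposite inequality.

Conversely, `P` sends `φ` to a Hahn–Banach extension of `φ|E₀`. Testing against almost-norming
points, the 3-ball property shows that a functional attaining its norm on `E₀` is `ℓ¹`-orthogonal
to the annihilator, which is the norm identity, and that such functionals with equal restrictions
are equal and form an additive set, which makes `P` well defined and linear.
-/

open Metric Filter Topology ContinuousLinearMap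

lemma le_of_forall_pos_le_add_mul {a b C : ℝ} (h : ∀ δ > 0, a ≤ b + δ * C) : a ≤ b := by
  have hlim : Tendsto (fun δ : ℝ => b + δ * C) (𝓝[>] 0) (𝓝 b) :=
    ((continuous_const.add (continuous_id.mul continuous_const)).tendsto' 0 b (by simp)).mono_left
      nhdsWithin_le_nhds
  exact ge_of_tendsto hlim (eventually_nhdsWithin_of_forall h)

lemma LinearMap.apply_eq_zero_of_forall_mem_apply_le {𝕜 M : Type*} [Field 𝕜] [LinearOrder 𝕜]
    [IsStrictOrderedRing 𝕜] [AddCommGroup M] [Module 𝕜 M] {g : M →ₗ[𝕜] 𝕜} {S : Submodule 𝕜 M}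
    {C : 𝕜} (h : ∀ z ∈ S, g z ≤ C) : ∀ z ∈ S, g z = 0 := by
  intro z hz
  by_contra hne
  have := h (((C + 1) / g z) • z) (S.smul_mem _ hz)
  rw [map_smul, smul_eq_mul, div_mul_cancel₀ _ hne] at this
  linarith

section

variable {E : Type*} [NormedAddCommGroup E] [NormedSpace ℝ E]

namespace ContinuousLinearMap

lemma apply_le_norm (f : E →L[ℝ] ℝ) {x : E} (hx : ‖x‖ ≤ 1) : f x ≤ ‖f‖ :=
  (Real.le_norm_self _).trans (f.unit_le_opNorm x hx)

lemma exists_norm_le_one_sub_le_apply (f : E →L[ℝ] ℝ) {δ : ℝ} (hδ : 0 < δ) :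
    ∃ x : E, ‖x‖ ≤ 1 ∧ ‖f‖ - δ ≤ f x := by
  obtain ⟨x, hx, hfx⟩ := f.exists_lt_apply_of_lt_opNorm (sub_lt_self ‖f‖ hδ)
  rcases le_total 0 (f x) with h | h
  · exact ⟨x, hx.le, by rw [Real.norm_of_nonneg h] at hfx; exact hfx.le⟩
  · refine ⟨-x, by rw [norm_neg]; exact hx.le, ?_⟩
    rw [Real.norm_of_nonpos h] at hfx
    rw [map_neg]
    exact hfx.le

lemma apply_sub_le_of_norm_add_sub_le (χ : E →L[ℝ] ℝ) {x y z : E} {δ : ℝ} (hy : ‖χ‖ - δ ≤ χ y)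
    (h : ‖x + y - z‖ ≤ 1 + δ) : χ (x - z) ≤ δ * (‖χ‖ + 1) := by
  have hle : χ (x + y - z) ≤ ‖χ‖ * (1 + δ) := (Real.le_norm_self _).trans (χ.le_opNorm_of_le h)
  have hsplit : χ (x - z) = χ (x + y - z) - χ y := by rw [← map_sub]; congr 1; abel
  linarith

lemma le_apply_sub_of_norm_add_neg_sub_le (χ : E →L[ℝ] ℝ) {x y z : E} {δ : ℝ}
    (hy : ‖χ‖ - δ ≤ χ y) (h : ‖x + -y - z‖ ≤ 1 + δ) : -(δ * (‖χ‖ + 1)) ≤ χ (x - z) := by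
  have := χ.apply_sub_le_of_norm_add_sub_le (x := z) (z := x) hy (by
    rwa [← norm_neg, neg_sub, sub_add_eq_sub_sub, sub_neg_eq_add, sub_add_eq_add_sub] at h)
  rw [← neg_sub, map_neg] at this
  linarith

lemma sum_norm_comp_single_le {ι : Type*} [Fintype ι] [DecidableEq ι] (f : (ι → E) →L[ℝ] ℝ) :
    ∑ i, ‖f.comp (.single ℝ (fun _ => E) i)‖ ≤ ‖f‖ := by
  refine le_of_forall_pos_le_add_mul (C := Fintype.card ι) fun δ hδ => ?_
  choose v hv hfv using fun i =>
    (f.comp (.single ℝ (fun _ => E) i)).exists_norm_le_one_sub_le_apply hδ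
  calc ∑ i, ‖f.comp (.single ℝ (fun _ => E) i)‖
      = ∑ i, (‖f.comp (.single ℝ (fun _ => E) i)‖ - δ) + δ * Fintype.card ι := by
        simp [Finset.sum_sub_distrib, mul_comm]
    _ ≤ ∑ i, f.comp (.single ℝ (fun _ => E) i) (v i) + δ * Fintype.card ι := by
        gcongr with i; exact hfv i
    _ ≤ ‖f‖ + δ * Fintype.card ι := by
        rw [sum_comp_single]
        gcongr
        exact f.apply_le_norm ((pi_norm_le_iff_of_nonneg zero_le_one).mpr hv)

end ContinuousLinearMap

namespace Submodule

variable (E₀ : Submodule ℝ E)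

def HasThreeBallProperty : Prop :=
  ∀ x : E, ‖x‖ ≤ 1 →
    ∀ y₁ ∈ E₀, ∀ y₂ ∈ E₀, ∀ y₃ ∈ E₀,
      ‖y₁‖ ≤ 1 → ‖y₂‖ ≤ 1 → ‖y₃‖ ≤ 1 →
        ∀ ε > (0 : ℝ), ∃ y ∈ E₀,
          ‖x + y₁ - y‖ ≤ 1 + ε ∧ ‖x + y₂ - y‖ ≤ 1 + ε ∧ ‖x + y₃ - y‖ ≤ 1 + ε

def IsNormingFor (χ : E →L[ℝ] ℝ) : Prop := ‖χ‖ ≤ ‖χ.comp E₀.subtypeL‖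

noncomputable def hahnBanachExtension (φ : E →L[ℝ] ℝ) : E →L[ℝ] ℝ :=
  (exists_extension_norm_eq E₀ (φ.comp E₀.subtypeL)).choose

variable {E₀}

lemma comp_subtypeL_eq_zero_iff {φ : E →L[ℝ] ℝ} :
    φ.comp E₀.subtypeL = 0 ↔ ∀ y ∈ E₀, φ y = 0 := by
  simp [ContinuousLinearMap.ext_iff]

lemma isNormingFor_zero : E₀.IsNormingFor 0 := by
  rw [IsNormingFor, zero_comp, opNorm_zero, opNorm_zero]

lemma IsNormingFor.smul {χ : E →L[ℝ] ℝ} (h : E₀.IsNormingFor χ) (c : ℝ) :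
    E₀.IsNormingFor (c • χ) := by
  rcases eq_or_ne c 0 with rfl | hc
  · rw [zero_smul]
    exact isNormingFor_zero
  have hle : ‖χ.comp E₀.subtypeL‖ ≤ ‖c‖⁻¹ * ‖(c • χ).comp E₀.subtypeL‖ := by
    simpa [smul_comp, inv_smul_smul₀ hc] using opNorm_smul_le c⁻¹ ((c • χ).comp E₀.subtypeL)
  calc ‖c • χ‖ = ‖c‖ * ‖χ‖ := norm_smul c χ
    _ ≤ ‖c‖ * (‖c‖⁻¹ * ‖(c • χ).comp E₀.subtypeL‖) := by gcongr; exact h.trans hle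
    _ = ‖(c • χ).comp E₀.subtypeL‖ := by field_simp

lemma IsNormingFor.exists_mem_norm_le_one_sub_le_apply {χ : E →L[ℝ] ℝ} (h : E₀.IsNormingFor χ)
    {δ : ℝ} (hδ : 0 < δ) : ∃ y ∈ E₀, ‖y‖ ≤ 1 ∧ ‖χ‖ - δ ≤ χ y := by
  obtain ⟨y, hy, hχy⟩ := (χ.comp E₀.subtypeL).exists_norm_le_one_sub_le_apply hδ
  exact ⟨y, y.2, hy, (sub_le_sub_right h δ).trans hχy⟩

lemma hahnBanachExtension_apply_of_mem (φ : E →L[ℝ] ℝ) {y : E} (hy : y ∈ E₀) :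
    E₀.hahnBanachExtension φ y = φ y :=
  (exists_extension_norm_eq E₀ (φ.comp E₀.subtypeL)).choose_spec.1 ⟨y, hy⟩

lemma hahnBanachExtension_comp_subtypeL (φ : E →L[ℝ] ℝ) :
    (E₀.hahnBanachExtension φ).comp E₀.subtypeL = φ.comp E₀.subtypeL :=
  ContinuousLinearMap.ext fun y => hahnBanachExtension_apply_of_mem φ y.2

lemma norm_hahnBanachExtension (φ : E →L[ℝ] ℝ) :
    ‖E₀.hahnBanachExtension φ‖ = ‖φ.comp E₀.subtypeL‖ :=
  (exists_extension_norm_eq E₀ (φ.comp E₀.subtypeL)).choose_spec.2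

lemma isNormingFor_hahnBanachExtension (φ : E →L[ℝ] ℝ) :
    E₀.IsNormingFor (E₀.hahnBanachExtension φ) := by
  rw [IsNormingFor, hahnBanachExtension_comp_subtypeL, norm_hahnBanachExtension]

lemma hahnBanachExtension_hahnBanachExtension (φ : E →L[ℝ] ℝ) :
    E₀.hahnBanachExtension (E₀.hahnBanachExtension φ) = E₀.hahnBanachExtension φ := by
  have h := hahnBanachExtension_comp_subtypeL (E₀ := E₀) φ
  unfold hahnBanachExtension at h ⊢
  simp only [h]

lemma hahnBanachExtension_eq_zero_iff {φ : E →L[ℝ] ℝ} :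
    E₀.hahnBanachExtension φ = 0 ↔ ∀ y ∈ E₀, φ y = 0 := by
  rw [← norm_eq_zero, norm_hahnBanachExtension, opNorm_zero_iff, comp_subtypeL_eq_zero_iff]

namespace HasThreeBallProperty

variable (hb : E₀.HasThreeBallProperty)
include hb

lemma norm_add_norm_le {χ ψ : E →L[ℝ] ℝ} (hχ : E₀.IsNormingFor χ) (hψ : ∀ y ∈ E₀, ψ y = 0) :
    ‖χ‖ + ‖ψ‖ ≤ ‖χ + ψ‖ := by
  refine le_of_forall_pos_le_add_mul (C := ‖χ + ψ‖ + ‖χ‖ + 3) fun δ hδ => ?_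
  obtain ⟨x, hx, hψx⟩ := ψ.exists_norm_le_one_sub_le_apply hδ
  obtain ⟨y, hyE, hy, hχy⟩ := hχ.exists_mem_norm_le_one_sub_le_apply hδ
  obtain ⟨z, hzE, hz_pos, hz_neg, -⟩ :=
    hb x hx y hyE (-y) (neg_mem hyE) y hyE hy (by rwa [norm_neg]) hy δ hδ
  have hle : (χ + ψ) (x + y - z) ≤ ‖χ + ψ‖ * (1 + δ) :=
    (Real.le_norm_self _).trans ((χ + ψ).le_opNorm_of_le hz_pos)
  have hsplit : (χ + ψ) (x + y - z) = χ (x - z) + χ y + ψ x := by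
    simp only [add_apply, map_add, map_sub, hψ y hyE, hψ z hzE]
    ring
  have := χ.le_apply_sub_of_norm_add_neg_sub_le hχy hz_neg
  linarith

lemma add_eq_of_comp_subtypeL_eq {χ₁ χ₂ χ₀ : E →L[ℝ] ℝ} (h₁ : E₀.IsNormingFor χ₁)
    (h₂ : E₀.IsNormingFor χ₂) (h₀ : E₀.IsNormingFor χ₀)
    (h : (χ₁ + χ₂).comp E₀.subtypeL = χ₀.comp E₀.subtypeL) : χ₁ + χ₂ = χ₀ := by
  set ψ := χ₁ + χ₂ - χ₀ with hψ_def
  suffices ‖ψ‖ ≤ 0 from sub_eq_zero.mp (norm_le_zero_iff.mp this)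
  refine le_of_forall_pos_le_add_mul (C := ‖χ₁‖ + ‖χ₂‖ + ‖χ₀‖ + 4) fun δ hδ => ?_
  obtain ⟨x, hx, hψx⟩ := ψ.exists_norm_le_one_sub_le_apply hδ
  obtain ⟨y₁, hy₁E, hy₁, hχ₁y⟩ := h₁.exists_mem_norm_le_one_sub_le_apply hδ
  obtain ⟨y₂, hy₂E, hy₂, hχ₂y⟩ := h₂.exists_mem_norm_le_one_sub_le_apply hδ
  obtain ⟨y₀, hy₀E, hy₀, hχ₀y⟩ := h₀.exists_mem_norm_le_one_sub_le_apply hδ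
  obtain ⟨z, hzE, hz₁, hz₂, hz₀⟩ :=
    hb x hx y₁ hy₁E y₂ hy₂E (-y₀) (neg_mem hy₀E) hy₁ hy₂ (by rwa [norm_neg]) δ hδ
  have hψx_eq : ψ x = χ₁ (x - z) + χ₂ (x - z) - χ₀ (x - z) := by
    have hψz : (χ₁ + χ₂) z = χ₀ z := DFunLike.congr_fun h ⟨z, hzE⟩
    simp only [hψ_def, sub_apply, add_apply, map_sub] at hψz ⊢
    linarith
  have := χ₁.apply_sub_le_of_norm_add_sub_le hχ₁y hz₁
  have := χ₂.apply_sub_le_of_norm_add_sub_le hχ₂y hz₂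
  have := χ₀.le_apply_sub_of_norm_add_neg_sub_le hχ₀y hz₀
  linarith

lemma eq_of_comp_subtypeL_eq {χ₁ χ₂ : E →L[ℝ] ℝ} (h₁ : E₀.IsNormingFor χ₁)
    (h₂ : E₀.IsNormingFor χ₂) (h : χ₁.comp E₀.subtypeL = χ₂.comp E₀.subtypeL) : χ₁ = χ₂ := by
  simpa using hb.add_eq_of_comp_subtypeL_eq h₁ isNormingFor_zero h₂ (by simpa using h)

lemma hahnBanachExtension_add (φ φ' : E →L[ℝ] ℝ) :
    E₀.hahnBanachExtension (φ + φ') = E₀.hahnBanachExtension φ + E₀.hahnBanachExtension φ' :=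
  (hb.add_eq_of_comp_subtypeL_eq (isNormingFor_hahnBanachExtension φ)
    (isNormingFor_hahnBanachExtension φ') (isNormingFor_hahnBanachExtension (φ + φ')) (by
      simp only [add_comp, hahnBanachExtension_comp_subtypeL])).symm

lemma hahnBanachExtension_smul (c : ℝ) (φ : E →L[ℝ] ℝ) :
    E₀.hahnBanachExtension (c • φ) = c • E₀.hahnBanachExtension φ :=
  hb.eq_of_comp_subtypeL_eq (isNormingFor_hahnBanachExtension _)
    ((isNormingFor_hahnBanachExtension φ).smul c) (by
      simp only [smul_comp, hahnBanachExtension_comp_subtypeL])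

lemma norm_eq_norm_hahnBanachExtension_add (φ : E →L[ℝ] ℝ) :
    ‖φ‖ = ‖E₀.hahnBanachExtension φ‖ + ‖φ - E₀.hahnBanachExtension φ‖ := by
  set χ := E₀.hahnBanachExtension φ
  have hψ : ∀ y ∈ E₀, (φ - χ) y = 0 := fun y hy => by
    rw [sub_apply, hahnBanachExtension_apply_of_mem φ hy, sub_self]
  refine le_antisymm ?_ ?_
  · calc ‖φ‖ = ‖χ + (φ - χ)‖ := by rw [add_sub_cancel]
      _ ≤ ‖χ‖ + ‖φ - χ‖ := norm_add_le _ _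
  · calc ‖χ‖ + ‖φ - χ‖ ≤ ‖χ + (φ - χ)‖ :=
          hb.norm_add_norm_le (isNormingFor_hahnBanachExtension φ) hψ
      _ = ‖φ‖ := by rw [add_sub_cancel]

theorem isMIdeal : IsMIdeal (E₀ : Set E) := by
  let P : (E →L[ℝ] ℝ) →L[ℝ] (E →L[ℝ] ℝ) := LinearMap.mkContinuous
    { toFun := E₀.hahnBanachExtension
      map_add' := hb.hahnBanachExtension_add
      map_smul' := hb.hahnBanachExtension_smul }
    1 fun φ => by
      show ‖E₀.hahnBanachExtension φ‖ ≤ 1 * ‖φ‖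
      rw [one_mul, norm_hahnBanachExtension]
      exact (φ.opNorm_comp_le _).trans
        (mul_le_of_le_one_right (norm_nonneg φ) (norm_subtypeL_le E₀))
  exact ⟨P, hahnBanachExtension_hahnBanachExtension, fun _ => hahnBanachExtension_eq_zero_iff,
    hb.norm_eq_norm_hahnBanachExtension_add⟩

end HasThreeBallProperty

end Submodule

lemma Submodule.exists_sum_apply_eq_zero_and_mul_sum_norm_le (E₀ : Submodule ℝ E)
    {ι : Type*} [Fintype ι] {w : ι → E} {r s : ℝ} (hs : 0 < s) (hsr : s < r)
    (hfar : ∀ z ∈ E₀, ∃ i, r < ‖w i - z‖) :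
    ∃ φ : ι → E →L[ℝ] ℝ, (∀ z ∈ E₀, (∑ i, φ i) z = 0) ∧
      s * ∑ i, ‖φ i‖ ≤ ∑ i, φ i (w i) ∧ 0 < ∑ i, φ i (w i) := by
  classical
  let t : Set (ι → E) := (fun z i => w i - z) '' E₀
  have ht : Convex ℝ t := E₀.convex.affine_image
    (AffineMap.const ℝ E w - (LinearMap.pi fun _ => LinearMap.id).toAffineMap)
  have hdisj : Disjoint (ball 0 r) t := by
    rw [Set.disjoint_left]
    rintro _ hv ⟨z, hz, rfl⟩
    obtain ⟨i, hi⟩ := hfar z hz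
    exact hi.not_ge ((norm_le_pi_norm _ i).trans (mem_ball_zero_iff.1 hv).le)
  obtain ⟨f, u, hf_ball, hf_t⟩ := geometric_hahn_banach_open (convex_ball 0 r) isOpen_ball ht hdisj
  let φ : ι → E →L[ℝ] ℝ := fun i => f.comp (.single ℝ (fun _ => E) i)
  have hf_apply (v : ι → E) : f v = ∑ i, φ i (v i) := (sum_comp_single ℝ (fun _ => E) f v).symm
  have hu : 0 < u := by simpa using hf_ball 0 (mem_ball_self (hs.trans hsr))
  have hu_le : u ≤ ∑ i, φ i (w i) := by
    rw [← hf_apply]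
    exact hf_t _ ⟨0, E₀.zero_mem, by simp⟩
  have hf_norm : ‖f‖ ≤ u / s := by
    refine f.opNorm_bound_of_ball_bound hs u fun v hv => ?_
    have hv' : ‖v‖ < r := (mem_closedBall_zero_iff.1 hv).trans_lt hsr
    have h_pos := hf_ball v (mem_ball_zero_iff.2 hv')
    have h_neg := hf_ball (-v) (mem_ball_zero_iff.2 (by rwa [norm_neg]))
    rw [map_neg] at h_neg
    rw [Real.norm_eq_abs]
    exact abs_le.2 ⟨by linarith, h_pos.le⟩
  refine ⟨φ, ?_, ?_, hu.trans_le hu_le⟩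
  · -- `f` is bounded below on the affine subspace `t`, so it vanishes on its direction
    refine LinearMap.apply_eq_zero_of_forall_mem_apply_le (g := (∑ i, φ i).toLinearMap)
      (C := f w - u) fun z hz => ?_
    have hsub : f (fun i => w i - z) = f w - ∑ i, φ i z := by
      simp only [hf_apply, map_sub, Finset.sum_sub_distrib]
    have := hf_t _ ⟨z, hz, rfl⟩
    simp only [coe_coe, sum_apply]
    linarith
  · calc s * ∑ i, ‖φ i‖ ≤ s * (u / s) := by gcongr; exact f.sum_norm_comp_single_le.trans hf_norm
      _ = u := mul_div_cancel₀ u hs.ne'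
      _ ≤ ∑ i, φ i (w i) := hu_le

namespace IsMIdeal

lemma sum_apply_add_le {E₀ : Set E} (h : IsMIdeal E₀) {ι : Type*} [Fintype ι]
    {φ : ι → E →L[ℝ] ℝ} (hφ : ∀ y ∈ E₀, (∑ i, φ i) y = 0) {x : E} (hx : ‖x‖ ≤ 1) {y : ι → E}
    (hyE : ∀ i, y i ∈ E₀) (hy : ∀ i, ‖y i‖ ≤ 1) : ∑ i, φ i (x + y i) ≤ ∑ i, ‖φ i‖ := by
  obtain ⟨P, hP_idem, hP_ker, hP_norm⟩ := h
  have hPx : ∑ i, P (φ i) x = 0 := by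
    rw [← sum_apply, ← map_sum, (hP_ker _).mpr hφ, zero_apply]
  have hsplit : ∀ i, φ i (x + y i) = (φ i - P (φ i)) x + P (φ i) (y i) + P (φ i) x := by
    intro i
    have : (φ i - P (φ i)) (y i) = 0 :=
      (hP_ker _).mp (by rw [map_sub, hP_idem, sub_self]) _ (hyE i)
    simp only [sub_apply, map_add] at this ⊢
    linarith
  calc ∑ i, φ i (x + y i) = ∑ i, ((φ i - P (φ i)) x + P (φ i) (y i)) := by
        rw [Finset.sum_congr rfl fun i _ => hsplit i, Finset.sum_add_distrib, hPx, add_zero]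
    _ ≤ ∑ i, (‖φ i - P (φ i)‖ + ‖P (φ i)‖) := by
        gcongr with i
        exacts [(φ i - P (φ i)).apply_le_norm hx, (P (φ i)).apply_le_norm (hy i)]
    _ = ∑ i, ‖φ i‖ := Finset.sum_congr rfl fun i _ => by rw [add_comm, ← hP_norm]

theorem exists_forall_norm_add_sub_le {E₀ : Submodule ℝ E} (h : IsMIdeal (E₀ : Set E))
    {ι : Type*} [Fintype ι] {x : E} (hx : ‖x‖ ≤ 1) {y : ι → E} (hyE : ∀ i, y i ∈ E₀)
    (hy : ∀ i, ‖y i‖ ≤ 1) {ε : ℝ} (hε : 0 < ε) : ∃ z ∈ E₀, ∀ i, ‖x + y i - z‖ ≤ 1 + ε := by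
  by_contra! hfar
  obtain ⟨φ, hφ, hnorm, hpos⟩ := E₀.exists_sum_apply_eq_zero_and_mul_sum_norm_le
    (w := fun i => x + y i) (s := 1 + ε / 2) (by positivity) (by linarith) hfar
  have hle := h.sum_apply_add_le hφ hx hyE hy
  nlinarith

end IsMIdeal

end

theorem isMIdeal_iff_threeBallProperty_general {E : Type*} [NormedAddCommGroup E] [NormedSpace ℝ E]
    (E₀ : Submodule ℝ E) :
    IsMIdeal (E₀ : Set E) ↔
      ∀ x : E, ‖x‖ ≤ 1 →
        ∀ y₁ ∈ E₀, ∀ y₂ ∈ E₀, ∀ y₃ ∈ E₀,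
          ‖y₁‖ ≤ 1 → ‖y₂‖ ≤ 1 → ‖y₃‖ ≤ 1 →
            ∀ ε > (0 : ℝ), ∃ y ∈ E₀,
              ‖x + y₁ - y‖ ≤ 1 + ε ∧ ‖x + y₂ - y‖ ≤ 1 + ε ∧ ‖x + y₃ - y‖ ≤ 1 + ε := by
  refine ⟨fun h x hx y₁ hy₁ y₂ hy₂ y₃ hy₃ h₁ h₂ h₃ ε hε => ?_,
    Submodule.HasThreeBallProperty.isMIdeal⟩
  obtain ⟨y, hy, hnorm⟩ := h.exists_forall_norm_add_sub_le hx (y := ![y₁, y₂, y₃])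
    (by simp [Fin.forall_fin_succ, *]) (by simp [Fin.forall_fin_succ, *]) hε
  exact ⟨y, hy, hnorm 0, hnorm 1, hnorm 2⟩

/-- A closed subspace `E₀` of a real Banach space `E` is an M-ideal in `E` if and only if
it has the 3-ball property. -/
theorem isMIdeal_iff_threeBallProperty {E : Type*} [NormedAddCommGroup E] [NormedSpace ℝ E]
    [CompleteSpace E] (E₀ : Submodule ℝ E) (hE₀ : IsClosed (E₀ : Set E)) :
    IsMIdeal (E₀ : Set E) ↔
      ∀ x : E, ‖x‖ ≤ 1 →
        ∀ y₁ ∈ E₀, ∀ y₂ ∈ E₀, ∀ y₃ ∈ E₀,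
          ‖y₁‖ ≤ 1 → ‖y₂‖ ≤ 1 → ‖y₃‖ ≤ 1 →
            ∀ ε > (0 : ℝ), ∃ y ∈ E₀,
              ‖x + y₁ - y‖ ≤ 1 + ε ∧ ‖x + y₂ - y‖ ≤ 1 + ε ∧ ‖x + y₃ - y‖ ≤ 1 + ε :=
  isMIdeal_iff_threeBallProperty_general E₀
end

section
/- Let L be a locally compact Hausdorff space, Y a real Banach space, E a closed subspace of C_b(L,Y), and E₀ = E ∩ C₀(L,Y). If the closed unit ball of E₀ is dense in the closed unit ball of E for the topology of uniform convergence on compact subsets of L, then E₀ is an M-ideal in E. -/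
/-- A bounded continuous function vanishes at infinity if `{t | ε ≤ ‖f t‖}` is compact
for every `ε > 0`. -/
def ZeroAtInfty {L Y : Type*} [TopologicalSpace L] [NormedAddCommGroup Y]
    (f : BoundedContinuousFunction L Y) : Prop :=
  ∀ ε > (0 : ℝ), IsCompact {t : L | ε ≤ ‖f t‖}


/-!
The projection sends `φ` to the functional `f ↦ lim φ (gᵢ)`, where `gᵢ ∈ E₀` is a bounded net
converging to `f` uniformly on compact sets. The limit exists and does not depend on the net
because, on bounded subsets of `E₀`, a continuous functional is continuous for uniform convergence
on compacts: otherwise a gliding hump produces a bounded sum of functions with almost disjoint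
supports on which `φ` is unbounded. The hypothesis provides such nets with `‖gᵢ‖ ≤ ‖f‖`;
averaging approximants along a chain of compacts also achieves `‖f - gᵢ‖ ≤ ‖f‖ + ε`. This gives
`‖φ‖ ≥ ‖P φ‖ + ‖φ - P φ‖`: for `g ∈ E₀` and `y` in the unit ball, `g + (y - gᵢ)` is eventually
almost in the unit ball, since `y - gᵢ` is small on the compact set where `g` is not.
-/

open BoundedContinuousFunction Filter Topology TopologicalSpace

section ZeroAtInfty

variable {L Y : Type*} [TopologicalSpace L] [NormedAddCommGroup Y]

theorem zeroAtInfty_iff_tendsto_cocompact (f : L →ᵇ Y) :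
    ZeroAtInfty f ↔ Tendsto f (cocompact L) (𝓝 0) := by
  simp only [Metric.tendsto_nhds, dist_zero_right]
  refine forall₂_congr fun ε hε => ⟨fun hf => ?_, fun hf => ?_⟩
  · exact mem_cocompact.2 ⟨_, hf, fun t (ht : ¬ε ≤ ‖f t‖) => not_le.1 ht⟩
  · obtain ⟨K, hK, hKf⟩ := mem_cocompact.1 hf
    refine hK.of_isClosed_subset (isClosed_le continuous_const f.continuous.norm)
      fun t (ht : ε ≤ ‖f t‖) => ?_
    by_contra htK
    exact not_lt.2 ht (hKf htK)

variable (L Y) [NormedSpace ℝ Y]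

def zeroAtInftySubmodule : Submodule ℝ (L →ᵇ Y) where
  carrier := {f | ZeroAtInfty f}
  zero_mem' := (zeroAtInfty_iff_tendsto_cocompact _).2 tendsto_const_nhds
  add_mem' {f g} (hf : ZeroAtInfty f) (hg : ZeroAtInfty g) : ZeroAtInfty (f + g) := by
    rw [zeroAtInfty_iff_tendsto_cocompact] at *
    rw [coe_add, ← add_zero 0]
    exact hf.add hg
  smul_mem' c f (hf : ZeroAtInfty f) : ZeroAtInfty (c • f) := by
    rw [zeroAtInfty_iff_tendsto_cocompact] at *
    rw [coe_smul, ← smul_zero c]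
    exact hf.const_smul c

end ZeroAtInfty

theorem Monotone.exists_forall_ne_mem_or_notMem_succ {α : Type*} {K : ℕ → Set α}
    (hK : Monotone K) (t : α) : ∃ m, ∀ i ≠ m, t ∈ K i ∨ t ∉ K (i + 1) := by
  classical
  by_cases h : ∃ j, t ∈ K (j + 1)
  · refine ⟨Nat.find h, fun i hi => ?_⟩
    rcases hi.lt_or_gt with hlt | hgt
    · exact Or.inr (Nat.find_min h hlt)
    · exact Or.inl (hK hgt (Nat.find_spec h))
  · exact ⟨0, fun i _ => Or.inr fun hi => h ⟨i, hi⟩⟩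

theorem norm_sum_range_le_of_monotone {α Y : Type*} [SeminormedAddCommGroup Y]
    {K : ℕ → Set α} (hK : Monotone K) {t : α} {u : ℕ → Y} {b c : ℝ} (hc : 0 ≤ c)
    (hin : ∀ i, t ∈ K i → ‖u i‖ ≤ b) (hout : ∀ i, t ∉ K (i + 1) → ‖u i‖ ≤ b)
    (hu : ∀ i, ‖u i‖ ≤ b + c) (n : ℕ) : ‖∑ i ∈ Finset.range n, u i‖ ≤ n * b + c := by
  classical
  obtain ⟨m, hm⟩ := hK.exists_forall_ne_mem_or_notMem_succ t
  have hle : ∀ i, ‖u i‖ ≤ b + if i = m then c else 0 := fun i => by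
    split_ifs with him
    · exact hu i
    · simpa using (hm i him).elim (hin i) (hout i)
  calc ‖∑ i ∈ Finset.range n, u i‖ ≤ ∑ i ∈ Finset.range n, (b + if i = m then c else 0) :=
        norm_sum_le_of_le _ fun i _ => hle i
    _ = n * b + if m ∈ Finset.range n then c else 0 := by
        rw [Finset.sum_add_distrib, Finset.sum_ite_eq', Finset.sum_const, Finset.card_range,
          nsmul_eq_mul]
    _ ≤ n * b + c := by split_ifs <;> linarith

theorem norm_inv_natCast_smul_sum_le {Y : Type*} [SeminormedAddCommGroup Y] [NormedSpace ℝ Y]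
    {y : ℕ → Y} {n : ℕ} (hn : 0 < n) {B : ℝ} (h : ‖∑ i ∈ Finset.range n, y i‖ ≤ n * B) :
    ‖(n : ℝ)⁻¹ • ∑ i ∈ Finset.range n, y i‖ ≤ B := by
  have hn' : (0 : ℝ) < n := by exact_mod_cast hn
  rw [norm_smul, norm_inv, RCLike.norm_natCast, inv_mul_le_iff₀ hn']
  exact h

theorem BoundedContinuousFunction.norm_add_le_max_add {L Y : Type*} [TopologicalSpace L]
    [SeminormedAddCommGroup Y] {g h : L →ᵇ Y} {a b ε : ℝ} (hg : ‖g‖ ≤ a) (hh : ‖h‖ ≤ b)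
    (hε : 0 ≤ ε) (hgh : ∀ t, ε ≤ ‖g t‖ → ‖h t‖ ≤ ε) : ‖g + h‖ ≤ max a b + ε := by
  have ha : 0 ≤ a := (norm_nonneg g).trans hg
  refine (norm_le (add_nonneg (ha.trans (le_max_left a b)) hε)).2 fun t =>
    (norm_add_le _ _).trans ?_
  have hgt := (g.norm_coe_le_norm t).trans hg
  have hht := (h.norm_coe_le_norm t).trans hh
  rcases le_or_gt ε ‖g t‖ with hεt | hεt
  · linarith [hgh t hεt, le_max_left a b]
  · linarith [le_max_right a b]

section Functional

variable {V : Type*} [SeminormedAddCommGroup V] [NormedSpace ℝ V]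

theorem ContinuousLinearMap.norm_le_of_forall_apply_le (ψ : V →L[ℝ] ℝ) {c : ℝ}
    (h : ∀ x, ‖x‖ ≤ 1 → ψ x ≤ c) : ‖ψ‖ ≤ c := by
  have hc : 0 ≤ c := by simpa using h 0 (by simp)
  refine ψ.opNorm_le_of_unit_norm hc fun x hx => abs_le.2 ⟨?_, h x hx.le⟩
  have := h (-x) (by simp [hx])
  rw [map_neg] at this
  linarith

theorem ContinuousLinearMap.norm_add_norm_le_of_forall_apply_add_le (ψ₁ ψ₂ : V →L[ℝ] ℝ) {c : ℝ}
    (h : ∀ x, ‖x‖ ≤ 1 → ∀ y, ‖y‖ ≤ 1 → ψ₁ x + ψ₂ y ≤ c) : ‖ψ₁‖ + ‖ψ₂‖ ≤ c := by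
  have h₂ : ∀ y, ‖y‖ ≤ 1 → ψ₂ y ≤ c - ‖ψ₁‖ := fun y hy => by
    have := ψ₁.norm_le_of_forall_apply_le (c := c - ψ₂ y) fun x hx => by linarith [h x hx y hy]
    linarith
  linarith [ψ₂.norm_le_of_forall_apply_le h₂]

end Functional

section Approximation

variable {L Y : Type*} [TopologicalSpace L] [NormedAddCommGroup Y]

theorem exists_monotone_compacts (K₀ : Compacts L) {δ : ℝ} (hδ : 0 < δ)
    (z : Compacts L → L →ᵇ Y) (hz : ∀ S, ZeroAtInfty (z S)) :
    ∃ K : ℕ → Compacts L, K 0 = K₀ ∧ Monotone K ∧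
      ∀ i t, t ∉ K (i + 1) → ‖z (K i) t‖ < δ := by
  let next (S : Compacts L) : Compacts L := S ⊔ ⟨{t | δ ≤ ‖z S t‖}, hz S δ hδ⟩
  have hsucc (i : ℕ) : next^[i + 1] K₀ = next (next^[i] K₀) := Function.iterate_succ_apply' ..
  refine ⟨fun i => next^[i] K₀, rfl, monotone_nat_of_le_succ fun i => ?_,
    fun i t (ht : t ∉ next^[i + 1] K₀) => ?_⟩
  · rw [hsucc]
    exact le_sup_left
  · rw [hsucc] at ht
    exact not_le.1 fun h => ht (Or.inr h)

variable [NormedSpace ℝ Y] {E : Submodule ℝ (L →ᵇ Y)}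

theorem exists_approx_norm_le
    (hdense : ∀ f ∈ E, ‖f‖ ≤ 1 → ∀ K : Set L, IsCompact K → ∀ ε > (0 : ℝ),
      ∃ g ∈ E, ZeroAtInfty g ∧ ‖g‖ ≤ 1 ∧ ∀ t ∈ K, ‖f t - g t‖ ≤ ε)
    {f : L →ᵇ Y} (hf : f ∈ E) {K : Set L} (hK : IsCompact K) {ε : ℝ} (hε : 0 < ε) :
    ∃ g ∈ E, ZeroAtInfty g ∧ ‖g‖ ≤ ‖f‖ ∧ ∀ t ∈ K, ‖f t - g t‖ ≤ ε := by
  rcases eq_or_ne f 0 with rfl | hf0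
  · exact ⟨0, E.zero_mem, (zeroAtInftySubmodule L Y).zero_mem, le_rfl,
      fun t _ => by simpa using hε.le⟩
  have hr : 0 < ‖f‖ := norm_pos_iff.2 hf0
  obtain ⟨g, hgE, hg₀, hg1, hgK⟩ := hdense (‖f‖⁻¹ • f) (E.smul_mem _ hf)
    (by rw [norm_smul, norm_inv, norm_norm, inv_mul_cancel₀ hr.ne']) K hK (ε / ‖f‖)
    (by positivity)
  refine ⟨‖f‖ • g, E.smul_mem _ hgE, (zeroAtInftySubmodule L Y).smul_mem _ hg₀, ?_,
    fun t ht => ?_⟩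
  · simpa [norm_smul] using mul_le_mul_of_nonneg_left hg1 hr.le
  · have hft : f t - (‖f‖ • g) t = ‖f‖ • ((‖f‖⁻¹ • f) t - g t) := by
      simp [smul_sub, smul_smul, mul_inv_cancel₀ hr.ne']
    rw [hft, norm_smul, norm_norm, ← le_div_iff₀' hr]
    exact hgK t ht

/-- Averaging `n` approximants, each small off the compact set recording where the previous ones
are large, keeps every point within `‖f‖ + ε` of `f`: at each point at most one of the averaged
differences `f - zᵢ` can exceed `‖f‖ + ε / 2`. -/
theorem exists_approx_norm_sub_le
    (happrox : ∀ f ∈ E, ∀ K : Set L, IsCompact K → ∀ ε > (0 : ℝ),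
      ∃ g ∈ E, ZeroAtInfty g ∧ ‖g‖ ≤ ‖f‖ ∧ ∀ t ∈ K, ‖f t - g t‖ ≤ ε)
    {f : L →ᵇ Y} (hf : f ∈ E) {K : Set L} (hK : IsCompact K) {ε : ℝ} (hε : 0 < ε) :
    ∃ g ∈ E, ZeroAtInfty g ∧ ‖g‖ ≤ ‖f‖ ∧ (∀ t ∈ K, ‖f t - g t‖ ≤ ε) ∧
      ‖f - g‖ ≤ ‖f‖ + ε := by
  set r := ‖f‖
  have hδ : 0 < ε / 2 := half_pos hε
  obtain ⟨n, hn⟩ := exists_nat_gt (r / (ε / 2))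
  have hn0 : 0 < n := by exact_mod_cast (div_nonneg (norm_nonneg f) hδ.le).trans_lt hn
  have hrn : r ≤ n * (ε / 2) := by rw [div_lt_iff₀ hδ] at hn; exact hn.le
  choose z hzE hz₀ hzr hzK using fun S : Compacts L => happrox f hf S S.isCompact _ hδ
  obtain ⟨Ks, hK0, hmono, hout⟩ := exists_monotone_compacts ⟨K, hK⟩ hδ z hz₀
  have hf_le (t : L) : ‖f t‖ ≤ r := f.norm_coe_le_norm t
  have hz_le (i : ℕ) (t : L) : ‖z (Ks i) t‖ ≤ r := ((z (Ks i)).norm_coe_le_norm t).trans (hzr _)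
  have hsub (t : L) : f t - ((n : ℝ)⁻¹ • ∑ i ∈ Finset.range n, z (Ks i)) t =
      (n : ℝ)⁻¹ • ∑ i ∈ Finset.range n, (f t - z (Ks i) t) := by
    rw [Finset.sum_sub_distrib, smul_sub, Finset.sum_const, Finset.card_range,
      ← Nat.cast_smul_eq_nsmul ℝ, smul_smul, inv_mul_cancel₀ (by positivity), one_smul]
    simp [BoundedContinuousFunction.sum_apply]
  refine ⟨(n : ℝ)⁻¹ • ∑ i ∈ Finset.range n, z (Ks i),
    E.smul_mem _ (E.sum_mem fun i _ => hzE _),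
    (zeroAtInftySubmodule L Y).smul_mem _ ((zeroAtInftySubmodule L Y).sum_mem fun i _ => hz₀ _),
    ?_, fun t ht => ?_, ?_⟩
  · refine norm_inv_natCast_smul_sum_le hn0 ?_
    calc ‖∑ i ∈ Finset.range n, z (Ks i)‖ ≤ ∑ i ∈ Finset.range n, r :=
          norm_sum_le_of_le _ fun i _ => hzr _
      _ = n * r := by simp
  · rw [hsub]
    refine (norm_inv_natCast_smul_sum_le hn0 ?_).trans (half_le_self hε.le)
    calc ‖∑ i ∈ Finset.range n, (f t - z (Ks i) t)‖ ≤ ∑ i ∈ Finset.range n, ε / 2 :=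
          norm_sum_le_of_le _ fun i _ =>
            hzK _ t (hmono (Nat.zero_le i) (by rw [hK0]; exact ht))
      _ = n * (ε / 2) := by simp
  · refine (norm_le (by positivity)).2 fun t => ?_
    rw [coe_sub, Pi.sub_apply, hsub]
    refine norm_inv_natCast_smul_sum_le hn0 ?_
    calc ‖∑ i ∈ Finset.range n, (f t - z (Ks i) t)‖ ≤ n * (r + ε / 2) + r :=
          norm_sum_range_le_of_monotone (K := fun i => (Ks i : Set L)) hmono (norm_nonneg f)
            (fun i hi => (hzK _ t hi).trans (by linarith [norm_nonneg f]))
            (fun i hi => (norm_sub_le _ _).trans (by linarith [hf_le t, hout i t hi]))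
            (fun i => (norm_sub_le _ _).trans (by linarith [hf_le t, hz_le i t]))
            n
      _ ≤ n * (r + ε) := by linarith

theorem exists_isCompact_abs_apply_le (Φ : (L →ᵇ Y) →L[ℝ] ℝ) (C : ℝ) {ε : ℝ} (hε : 0 < ε) :
    ∃ K : Set L, IsCompact K ∧ ∃ δ > 0, ∀ h ∈ zeroAtInftySubmodule L Y, ‖h‖ ≤ C →
      (∀ t ∈ K, ‖h t‖ ≤ δ) → |Φ h| ≤ ε := by
  obtain ⟨n, hn⟩ := exists_nat_gt (‖Φ‖ * (1 + C) / ε)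
  by_contra! hcon
  have hbig (K : Set L) (hK : IsCompact K) (δ : ℝ) (hδ : 0 < δ) :
      ∃ h ∈ zeroAtInftySubmodule L Y, ‖h‖ ≤ C ∧ (∀ t ∈ K, ‖h t‖ ≤ δ) ∧ ε < Φ h := by
    obtain ⟨h, h₀, hC, hK, hΦ⟩ := hcon K hK δ hδ
    rcases lt_abs.1 hΦ with hΦ | hΦ
    · exact ⟨h, h₀, hC, hK, hΦ⟩
    · exact ⟨-h, neg_mem h₀, by rwa [norm_neg], by simpa using hK, by simpa using hΦ⟩
  obtain ⟨h, -, hhC, -⟩ := hbig ∅ isCompact_empty 1 one_pos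
  have hC : 0 ≤ C := (norm_nonneg h).trans hhC
  have hn0 : (0 : ℝ) < n := lt_of_le_of_lt (by positivity) hn
  have hn0' : (0 : ℝ) ≤ 1 / n := by positivity
  choose z hz₀ hzC hzK hzΦ using fun S : Compacts L => hbig S S.isCompact (1 / n) (by positivity)
  obtain ⟨Ks, -, hmono, hout⟩ := exists_monotone_compacts ⊥ (δ := 1 / n) (by positivity) z hz₀
  -- The humps `z (Ks i)` have almost disjoint supports, so their sum stays bounded.
  have hs : ‖∑ i ∈ Finset.range n, z (Ks i)‖ ≤ 1 + C := (norm_le (by positivity)).2 fun t => by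
    rw [BoundedContinuousFunction.sum_apply]
    calc ‖∑ i ∈ Finset.range n, z (Ks i) t‖ ≤ n * (1 / n) + C :=
          norm_sum_range_le_of_monotone (K := fun i => (Ks i : Set L)) hmono hC
            (fun i hi => hzK _ t hi) (fun i hi => (hout i t hi).le)
            (fun i => ((z _).norm_coe_le_norm t).trans (by linarith [hzC (Ks i)])) n
      _ = 1 + C := by field_simp
  have hlower : n * ε ≤ Φ (∑ i ∈ Finset.range n, z (Ks i)) := by
    simpa [map_sum] using Finset.sum_le_sum fun i (_ : i ∈ Finset.range n) => (hzΦ (Ks i)).le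
  have hupper : Φ (∑ i ∈ Finset.range n, z (Ks i)) ≤ ‖Φ‖ * (1 + C) :=
    (le_abs_self _).trans ((Φ.le_opNorm _).trans (by gcongr))
  rw [div_lt_iff₀ hε] at hn
  linarith

/-- `C(L, Y)` carries the compact-open topology, in which convergence is uniform convergence on
compact sets. -/
def subtypeToContinuousMap (E : Submodule ℝ (L →ᵇ Y)) : E →ₗ[ℝ] C(L, Y) :=
  (toContinuousMapLinearMap L Y ℝ).comp E.subtype

@[simp]
theorem subtypeToContinuousMap_apply (f : E) (t : L) :
    subtypeToContinuousMap E f t = (f : L →ᵇ Y) t :=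
  rfl

theorem tendsto_apply_zero_of_tendsto_compactOpen (φ : E →L[ℝ] ℝ) {ι : Type*}
    {l : Filter ι} {v : ι → E} (h₀ : ∀ i, ZeroAtInfty (v i : L →ᵇ Y)) {C : ℝ}
    (hC : ∀ i, ‖v i‖ ≤ C) (hv : Tendsto (fun i => subtypeToContinuousMap E (v i)) l (𝓝 0)) :
    Tendsto (fun i => φ (v i)) l (𝓝 0) := by
  obtain ⟨Φ, hΦ, -⟩ := exists_extension_norm_eq E φ
  simp_rw [← hΦ]
  refine Metric.tendsto_nhds.2 fun ε hε => ?_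
  obtain ⟨K, hK, δ, hδ, hsmall⟩ := exists_isCompact_abs_apply_le Φ C (half_pos hε)
  have hunif := Metric.tendstoUniformlyOn_iff.1
    (ContinuousMap.tendsto_iff_forall_isCompact_tendstoUniformlyOn.1 hv K hK) δ hδ
  filter_upwards [hunif] with i hi
  rw [Real.dist_0_eq_abs]
  refine (hsmall _ (h₀ i) (hC i) fun t ht => ?_).trans_lt (half_lt_self hε)
  simpa using (hi t ht).le

theorem tendsto_apply_of_tendsto_sub (φ : E →L[ℝ] ℝ) {ι : Type*} {l : Filter ι}
    {u w : ι → E} (h₀ : ∀ i, ZeroAtInfty ((u i - w i : E) : L →ᵇ Y)) {C C' : ℝ}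
    (hu : ∀ i, ‖u i‖ ≤ C) (hw : ∀ i, ‖w i‖ ≤ C')
    (hv : Tendsto (fun i => subtypeToContinuousMap E (u i - w i)) l (𝓝 0)) {x : ℝ}
    (hφw : Tendsto (fun i => φ (w i)) l (𝓝 x)) : Tendsto (fun i => φ (u i)) l (𝓝 x) := by
  have hC (i : ι) : ‖u i - w i‖ ≤ C + C' := (norm_sub_le _ _).trans (add_le_add (hu i) (hw i))
  simpa using hφw.add (tendsto_apply_zero_of_tendsto_compactOpen φ h₀ hC hv)

end Approximation

section Projection

variable {L Y : Type*} [TopologicalSpace L] [NormedAddCommGroup Y] [NormedSpace ℝ Y]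
  {E : Submodule ℝ (L →ᵇ Y)} {ι : Type*} {l : Filter ι} {G : E → ι → E}

structure IsZeroAtInftyApprox (l : Filter ι) (G : E → ι → E) : Prop where
  mem (f : E) (i : ι) : (G f i : L →ᵇ Y) ∈ zeroAtInftySubmodule L Y
  norm_le (f : E) (i : ι) : ‖G f i‖ ≤ ‖f‖
  tendsto (f : E) :
    Tendsto (fun i => subtypeToContinuousMap E (G f i)) l (𝓝 (subtypeToContinuousMap E f))
  eventually_norm_sub_le (f : E) {ε : ℝ} (hε : 0 < ε) : ∀ᶠ i in l, ‖f - G f i‖ ≤ ‖f‖ + ε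

noncomputable def approxLimit (l : Filter ι) (G : E → ι → E) (φ : E →L[ℝ] ℝ) (f : E) : ℝ :=
  limUnder l fun i => φ (G f i)

namespace IsZeroAtInftyApprox

theorem eventually_forall_norm_sub_lt (hG : IsZeroAtInftyApprox l G) (f : E) {K : Set L}
    (hK : IsCompact K) {ε : ℝ} (hε : 0 < ε) :
    ∀ᶠ i in l, ∀ t ∈ K, ‖(f : L →ᵇ Y) t - (G f i : L →ᵇ Y) t‖ < ε := by
  have := ContinuousMap.tendsto_iff_forall_isCompact_tendstoUniformlyOn.1 (hG.tendsto f) K hK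
  simpa [dist_eq_norm] using Metric.tendstoUniformlyOn_iff.1 this ε hε

variable [l.NeBot]

theorem tendsto_approxLimit (hG : IsZeroAtInftyApprox l G) (φ : E →L[ℝ] ℝ) (f : E) :
    Tendsto (fun i => φ (G f i)) l (𝓝 (approxLimit l G φ f)) := by
  refine tendsto_nhds_limUnder (CompleteSpace.complete (cauchy_map_iff.2 ⟨‹_›, ?_⟩))
  rw [tendsto_uniformity_iff_dist_tendsto_zero]
  have hsub : Tendsto (fun p : ι × ι => φ (G f p.1 - G f p.2)) (l ×ˢ l) (𝓝 0) := by
    refine tendsto_apply_zero_of_tendsto_compactOpen φ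
      (fun p => sub_mem (hG.mem f p.1) (hG.mem f p.2)) (C := ‖f‖ + ‖f‖)
      (fun p => (norm_sub_le _ _).trans (add_le_add (hG.norm_le f _) (hG.norm_le f _))) ?_
    simpa [map_sub] using ((hG.tendsto f).comp tendsto_fst).sub ((hG.tendsto f).comp tendsto_snd)
  simpa [Real.dist_eq] using hsub.abs

theorem approxLimit_eq (hG : IsZeroAtInftyApprox l G) {φ : E →L[ℝ] ℝ} {f : E} {x : ℝ}
    (h : Tendsto (fun i => φ (G f i)) l (𝓝 x)) : approxLimit l G φ f = x :=
  tendsto_nhds_unique (hG.tendsto_approxLimit φ f) h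

theorem approxLimit_add (hG : IsZeroAtInftyApprox l G) (φ : E →L[ℝ] ℝ) (f g : E) :
    approxLimit l G φ (f + g) = approxLimit l G φ f + approxLimit l G φ g := by
  refine hG.approxLimit_eq (tendsto_apply_of_tendsto_sub φ (w := fun i => G f i + G g i)
    (fun i => sub_mem (hG.mem _ i) (add_mem (hG.mem f i) (hG.mem g i))) (hG.norm_le _)
    (fun i => (norm_add_le _ _).trans (add_le_add (hG.norm_le f i) (hG.norm_le g i))) ?_ ?_)
  · simpa [map_sub, map_add] using (hG.tendsto (f + g)).sub ((hG.tendsto f).add (hG.tendsto g))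
  · simpa using (hG.tendsto_approxLimit φ f).add (hG.tendsto_approxLimit φ g)

theorem approxLimit_smul (hG : IsZeroAtInftyApprox l G) (φ : E →L[ℝ] ℝ) (a : ℝ) (f : E) :
    approxLimit l G φ (a • f) = a * approxLimit l G φ f := by
  refine hG.approxLimit_eq (tendsto_apply_of_tendsto_sub φ (w := fun i => a • G f i)
    (fun i => sub_mem (hG.mem _ i) (Submodule.smul_mem _ a (hG.mem f i))) (hG.norm_le _)
    (fun i => (norm_smul_le _ _).trans (mul_le_mul_of_nonneg_left (hG.norm_le f i) (norm_nonneg a)))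
    ?_ ?_)
  · simpa [map_sub, map_smul] using (hG.tendsto (a • f)).sub ((hG.tendsto f).const_smul a)
  · simpa using (hG.tendsto_approxLimit φ f).const_mul a

theorem approxLimit_of_mem (hG : IsZeroAtInftyApprox l G) (φ : E →L[ℝ] ℝ) {f : E}
    (hf : (f : L →ᵇ Y) ∈ zeroAtInftySubmodule L Y) : approxLimit l G φ f = φ f := by
  refine hG.approxLimit_eq (tendsto_apply_of_tendsto_sub φ (w := fun _ => f)
    (fun i => sub_mem (hG.mem f i) hf) (hG.norm_le f) (fun _ => le_rfl) ?_ tendsto_const_nhds)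
  simpa [map_sub] using (hG.tendsto f).sub_const (subtypeToContinuousMap E f)

theorem norm_approxLimit_le (hG : IsZeroAtInftyApprox l G) (φ : E →L[ℝ] ℝ) (f : E) :
    ‖approxLimit l G φ f‖ ≤ ‖φ‖ * ‖f‖ :=
  le_of_tendsto (hG.tendsto_approxLimit φ f).norm (Eventually.of_forall fun i =>
    (φ.le_opNorm _).trans (mul_le_mul_of_nonneg_left (hG.norm_le f i) (norm_nonneg φ)))

theorem approxLimit_add_left (hG : IsZeroAtInftyApprox l G) (φ ψ : E →L[ℝ] ℝ) (f : E) :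
    approxLimit l G (φ + ψ) f = approxLimit l G φ f + approxLimit l G ψ f :=
  hG.approxLimit_eq (by simpa using (hG.tendsto_approxLimit φ f).add (hG.tendsto_approxLimit ψ f))

theorem approxLimit_smul_left (hG : IsZeroAtInftyApprox l G) (a : ℝ) (φ : E →L[ℝ] ℝ) (f : E) :
    approxLimit l G (a • φ) f = a * approxLimit l G φ f :=
  hG.approxLimit_eq (by simpa using (hG.tendsto_approxLimit φ f).const_mul a)

noncomputable def projFun (hG : IsZeroAtInftyApprox l G) (φ : E →L[ℝ] ℝ) : E →L[ℝ] ℝ :=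
  LinearMap.mkContinuous
    { toFun := approxLimit l G φ
      map_add' := hG.approxLimit_add φ
      map_smul' := hG.approxLimit_smul φ }
    ‖φ‖ fun f => hG.norm_approxLimit_le φ f

theorem projFun_apply (hG : IsZeroAtInftyApprox l G) (φ : E →L[ℝ] ℝ) (f : E) :
    hG.projFun φ f = approxLimit l G φ f :=
  rfl

theorem norm_projFun_le (hG : IsZeroAtInftyApprox l G) (φ : E →L[ℝ] ℝ) :
    ‖hG.projFun φ‖ ≤ ‖φ‖ :=
  LinearMap.mkContinuous_norm_le _ (norm_nonneg φ) _

noncomputable def proj (hG : IsZeroAtInftyApprox l G) : (E →L[ℝ] ℝ) →L[ℝ] (E →L[ℝ] ℝ) :=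
  LinearMap.mkContinuous
    { toFun := hG.projFun
      map_add' φ ψ := ContinuousLinearMap.ext fun f => by
        simp only [_root_.add_apply, projFun_apply]
        exact hG.approxLimit_add_left φ ψ f
      map_smul' a φ := ContinuousLinearMap.ext fun f => by
        simp only [_root_.smul_apply, projFun_apply, RingHom.id_apply, smul_eq_mul]
        exact hG.approxLimit_smul_left a φ f }
    1 fun φ => (hG.norm_projFun_le φ).trans_eq (one_mul _).symm

theorem proj_apply (hG : IsZeroAtInftyApprox l G) (φ : E →L[ℝ] ℝ) (f : E) :
    hG.proj φ f = approxLimit l G φ f :=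
  rfl

theorem proj_apply_of_mem (hG : IsZeroAtInftyApprox l G) (φ : E →L[ℝ] ℝ) {f : E}
    (hf : (f : L →ᵇ Y) ∈ zeroAtInftySubmodule L Y) : hG.proj φ f = φ f :=
  hG.approxLimit_of_mem φ hf

theorem proj_proj (hG : IsZeroAtInftyApprox l G) (φ : E →L[ℝ] ℝ) :
    hG.proj (hG.proj φ) = hG.proj φ :=
  ContinuousLinearMap.ext fun f => hG.approxLimit_eq <|
    (hG.tendsto_approxLimit φ f).congr fun i => (hG.proj_apply_of_mem φ (hG.mem f i)).symm

theorem proj_eq_zero_iff (hG : IsZeroAtInftyApprox l G) (φ : E →L[ℝ] ℝ) :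
    hG.proj φ = 0 ↔ ∀ y : E, (y : L →ᵇ Y) ∈ zeroAtInftySubmodule L Y → φ y = 0 := by
  refine ⟨fun h y hy => ?_, fun h => ContinuousLinearMap.ext fun f => hG.approxLimit_eq ?_⟩
  · rw [← hG.proj_apply_of_mem φ hy, h, zero_apply]
  · simpa only [h _ (hG.mem f _), zero_apply] using tendsto_const_nhds

theorem apply_add_sub_proj_apply_le (hG : IsZeroAtInftyApprox l G) (φ : E →L[ℝ] ℝ) {g : E}
    (hg : (g : L →ᵇ Y) ∈ zeroAtInftySubmodule L Y) (hg1 : ‖g‖ ≤ 1) {y : E} (hy : ‖y‖ ≤ 1) :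
    φ g + (φ - hG.proj φ) y ≤ ‖φ‖ := by
  have key (ε : ℝ) (hε : 0 < ε) : φ g + (φ - hG.proj φ) y ≤ ‖φ‖ * (1 + 2 * ε) := by
    have hlim : Tendsto (fun i => φ (g + (y - G y i))) l (𝓝 (φ g + (φ - hG.proj φ) y)) := by
      simpa [proj_apply] using
        tendsto_const_nhds.add (tendsto_const_nhds.sub (hG.tendsto_approxLimit φ y))
    refine le_of_tendsto hlim ?_
    filter_upwards [hG.eventually_norm_sub_le y hε,
      hG.eventually_forall_norm_sub_lt y (hg ε hε) hε] with i hi hK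
    have hnorm : ‖g + (y - G y i)‖ ≤ 1 + 2 * ε := by
      rw [Submodule.coe_norm, Submodule.coe_add]
      refine (norm_add_le_max_add hg1 (hi.trans (add_le_add hy le_rfl)) hε.le
        fun t ht => by simpa using (hK t ht).le).trans ?_
      rw [max_eq_right (by linarith)]
      linarith
    calc φ (g + (y - G y i)) ≤ ‖φ‖ * ‖g + (y - G y i)‖ := (le_abs_self _).trans (φ.le_opNorm _)
      _ ≤ ‖φ‖ * (1 + 2 * ε) := by gcongr
  have hlim : Tendsto (fun ε => ‖φ‖ * (1 + 2 * ε)) (𝓝[>] 0) (𝓝 ‖φ‖) := by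
    have : Continuous fun ε : ℝ => ‖φ‖ * (1 + 2 * ε) := by fun_prop
    simpa using (this.tendsto 0).mono_left nhdsWithin_le_nhds
  exact ge_of_tendsto hlim (eventually_nhdsWithin_of_forall key)

theorem norm_eq_norm_proj_add (hG : IsZeroAtInftyApprox l G) (φ : E →L[ℝ] ℝ) :
    ‖φ‖ = ‖hG.proj φ‖ + ‖φ - hG.proj φ‖ := by
  refine le_antisymm ?_ (ContinuousLinearMap.norm_add_norm_le_of_forall_apply_add_le _ _
    fun x hx y hy => ?_)
  · exact norm_le_norm_add_norm_sub' φ (hG.proj φ)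
  · rw [proj_apply]
    exact le_of_tendsto ((hG.tendsto_approxLimit φ x).add_const _) (Eventually.of_forall fun i =>
      hG.apply_add_sub_proj_apply_le φ (hG.mem x i) ((hG.norm_le x i).trans hx) hy)

end IsZeroAtInftyApprox

theorem exists_isZeroAtInftyApprox
    (happrox : ∀ f ∈ E, ∀ K : Set L, IsCompact K → ∀ ε > (0 : ℝ),
      ∃ g ∈ E, ZeroAtInfty g ∧ ‖g‖ ≤ ‖f‖ ∧ (∀ t ∈ K, ‖f t - g t‖ ≤ ε) ∧ ‖f - g‖ ≤ ‖f‖ + ε) :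
    ∃ G : E → Compacts L × ℕ → E, IsZeroAtInftyApprox atTop G := by
  choose g hgE hg₀ hgn hgK hgs using fun (f : E) (d : Compacts L × ℕ) =>
    happrox f f.2 d.1 d.1.isCompact (1 / (d.2 + 1)) Nat.one_div_pos_of_nat
  refine ⟨fun f d => ⟨g f d, hgE f d⟩, ⟨hg₀, hgn, fun f => ?_, fun f ε hε => ?_⟩⟩
  · rw [ContinuousMap.tendsto_iff_forall_isCompact_tendstoUniformlyOn]
    refine fun K hK => Metric.tendstoUniformlyOn_iff.2 fun ε hε => ?_
    obtain ⟨n, hn⟩ := exists_nat_one_div_lt hε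
    filter_upwards [eventually_ge_atTop (⟨K, hK⟩, n)] with d hd t ht
    rw [dist_eq_norm]
    exact (hgK f d t (hd.1 ht)).trans_lt ((Nat.one_div_le_one_div hd.2).trans_lt hn)
  · obtain ⟨n, hn⟩ := exists_nat_one_div_lt hε
    filter_upwards [eventually_ge_atTop (⊥, n)] with d hd
    have := Nat.one_div_le_one_div (α := ℝ) hd.2
    exact (hgs f d).trans (by rw [← Submodule.coe_norm]; linarith)

end Projection

theorem isMIdeal_of_denseUnifOnCompacts_general {L Y : Type*}
    [TopologicalSpace L]
    [NormedAddCommGroup Y] [NormedSpace ℝ Y]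
    (E : Submodule ℝ (BoundedContinuousFunction L Y))
    (hdense : ∀ f ∈ E, ‖f‖ ≤ 1 → ∀ K : Set L, IsCompact K → ∀ ε > (0 : ℝ),
      ∃ g ∈ E, ZeroAtInfty g ∧ ‖g‖ ≤ 1 ∧ ∀ t ∈ K, ‖f t - g t‖ ≤ ε) :
    IsMIdeal {f : ↥E | ZeroAtInfty (f : BoundedContinuousFunction L Y)} := by
  obtain ⟨G, hG⟩ := exists_isZeroAtInftyApprox fun f hf K hK ε hε =>
    exists_approx_norm_sub_le (fun f hf K hK ε hε => exists_approx_norm_le hdense hf hK hε)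
      hf hK hε
  exact ⟨hG.proj, hG.proj_proj, hG.proj_eq_zero_iff, hG.norm_eq_norm_proj_add⟩

/-- If the closed unit ball of `E₀ = E ∩ C₀(L,Y)` is dense in the closed unit ball of `E`
for the topology of uniform convergence on compact subsets of `L`, then `E₀` is an
M-ideal in `E`. -/
theorem isMIdeal_of_denseUnifOnCompacts {L Y : Type*}
    [TopologicalSpace L] [LocallyCompactSpace L] [T2Space L]
    [NormedAddCommGroup Y] [NormedSpace ℝ Y] [CompleteSpace Y]
    (E : Submodule ℝ (BoundedContinuousFunction L Y))
    (hE : IsClosed (E : Set (BoundedContinuousFunction L Y)))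
    (hdense : ∀ f ∈ E, ‖f‖ ≤ 1 → ∀ K : Set L, IsCompact K → ∀ ε > (0 : ℝ),
      ∃ g ∈ E, ZeroAtInfty g ∧ ‖g‖ ≤ 1 ∧ ∀ t ∈ K, ‖f t - g t‖ ≤ ε) :
    IsMIdeal {f : ↥E | ZeroAtInfty (f : BoundedContinuousFunction L Y)} :=
  isMIdeal_of_denseUnifOnCompacts_general E hdense
end

section
/- Let L be a locally compact Hausdorff space and Y a real Banach space. For every bounded linear functional ℓ on C₀(L,Y) and every ε > 0 there exists a continuous function φ : L → ℝ with compact support and 0 ≤ φ ≤ 1 such that the bounded linear functional ℓ_φ on C₀(L,Y) defined by ℓ_φ(f) = ℓ(φ·f) satisfies ‖ℓ − ℓ_φ‖ ≤ ε in the dual norm of C₀(L,Y)*. -/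
open scoped ZeroAtInfty
open Filter Set

namespace C0Aux

variable {L Y : Type*} [TopologicalSpace L] [NormedAddCommGroup Y] [NormedSpace ℝ Y]

theorem norm_apply_le (f : C₀(L, Y)) (t : L) : ‖f t‖ ≤ ‖f‖ := by
  rw [← ZeroAtInftyContinuousMap.norm_toBCF_eq_norm]
  exact f.toBCF.norm_coe_le_norm t

theorem norm_le' (f : C₀(L, Y)) {C : ℝ} (hC : 0 ≤ C) (h : ∀ t, ‖f t‖ ≤ C) : ‖f‖ ≤ C := by
  rw [← ZeroAtInftyContinuousMap.norm_toBCF_eq_norm]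
  exact (BoundedContinuousFunction.norm_le hC).2 h

/-- Pointwise multiplication of a `C₀` function by a continuous function bounded by 1. -/
def mul (ψ : C(L, ℝ)) (hψ : ∀ t, ‖ψ t‖ ≤ 1) (f : C₀(L, Y)) : C₀(L, Y) where
  toFun := fun t => ψ t • f t
  continuous_toFun := ψ.continuous.smul (map_continuous f)
  zero_at_infty' := by
    apply squeeze_zero_norm (a := fun t => ‖f t‖)
    · intro t
      rw [norm_smul]
      calc ‖ψ t‖ * ‖f t‖ ≤ 1 * ‖f t‖ := by
            exact mul_le_mul_of_nonneg_right (hψ t) (norm_nonneg _)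
        _ = ‖f t‖ := one_mul _
    · simpa using f.zero_at_infty'.norm

@[simp] theorem mul_apply (ψ : C(L, ℝ)) (hψ : ∀ t, ‖ψ t‖ ≤ 1) (f : C₀(L, Y)) (t : L) :
    mul ψ hψ f t = ψ t • f t := rfl

theorem norm_mul_le (ψ : C(L, ℝ)) (hψ : ∀ t, ‖ψ t‖ ≤ 1) (f : C₀(L, Y)) :
    ‖mul ψ hψ f‖ ≤ ‖f‖ := by
  apply norm_le' _ (norm_nonneg f)
  intro t
  rw [mul_apply, norm_smul]
  calc ‖ψ t‖ * ‖f t‖ ≤ 1 * ‖f t‖ := mul_le_mul_of_nonneg_right (hψ t) (norm_nonneg _)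
    _ ≤ ‖f‖ := by rw [one_mul]; exact norm_apply_le f t

/-- The multiplication operator as a continuous linear map. -/
noncomputable def mulCLM (ψ : C(L, ℝ)) (hψ : ∀ t, ‖ψ t‖ ≤ 1) : C₀(L, Y) →L[ℝ] C₀(L, Y) :=
  LinearMap.mkContinuous
    { toFun := mul ψ hψ
      map_add' := fun f g => by ext t; simp [smul_add]
      map_smul' := fun c f => by
        ext t
        simp only [mul_apply, ZeroAtInftyContinuousMap.smul_apply, RingHom.id_apply]
        exact smul_comm _ _ _ }
    1 (fun f => le_trans (norm_mul_le ψ hψ f) (by rw [one_mul]))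

@[simp] theorem mulCLM_apply (ψ : C(L, ℝ)) (hψ : ∀ t, ‖ψ t‖ ≤ 1) (f : C₀(L, Y)) (t : L) :
    mulCLM ψ hψ f t = ψ t • f t := rfl

end C0Aux

open C0Aux Topology Filter Set

/-- For every bounded linear functional `ℓ` on `C₀(L,Y)` and `ε > 0` there is a continuous
function `φ` with compact support, `0 ≤ φ ≤ 1`, such that the functional
`ℓ_φ : f ↦ ℓ(φ • f)` satisfies `‖ℓ - ℓ_φ‖ ≤ ε`. -/
theorem exists_compactSupport_functional_approx {L Y : Type*}
    [TopologicalSpace L] [LocallyCompactSpace L] [T2Space L]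
    [NormedAddCommGroup Y] [NormedSpace ℝ Y]
    (ℓ : C₀(L, Y) →L[ℝ] ℝ) (ε : ℝ) (hε : 0 < ε) :
    ∃ φ : C(L, ℝ), HasCompactSupport φ ∧ (∀ t, 0 ≤ φ t ∧ φ t ≤ 1) ∧
      ∃ m : C₀(L, Y) →L[ℝ] ℝ,
        (∀ f : C₀(L, Y), ∃ g : C₀(L, Y), (∀ t, g t = φ t • f t) ∧ m f = ℓ g) ∧
        ‖ℓ - m‖ ≤ ε := by
  classical
  set δ : ℝ := min ε (1 / 2) with hδdef
  have hδpos : 0 < δ := lt_min hε (by norm_num)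
  have hδε : δ ≤ ε := min_le_left _ _
  have hδhalf : δ ≤ 1 / 2 := min_le_right _ _
  -- choose a near-norming element f₀
  obtain ⟨x, hx1, hx2⟩ := ℓ.exists_lt_apply_of_lt_opNorm
    (r := ‖ℓ‖ - δ ^ 2) (by nlinarith)
  set f₀ : C₀(L, Y) := if 0 ≤ ℓ x then x else -x with hf₀def
  have hf₀norm : ‖f₀‖ ≤ 1 := by
    rw [hf₀def]; split <;> simpa using hx1.le
  have hf₀ : ‖ℓ‖ - δ ^ 2 < ℓ f₀ := by
    rw [hf₀def]
    rcases le_or_gt 0 (ℓ x) with h | h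
    · rw [if_pos h]
      rwa [Real.norm_eq_abs, abs_of_nonneg h] at hx2
    · rw [if_neg (not_le.mpr h), map_neg]
      rwa [Real.norm_eq_abs, abs_of_neg h] at hx2
  -- the compact set where `f₀` is large
  set K : Set L := {t | δ ≤ ‖f₀ t‖} with hKdef
  obtain ⟨C, hC, hCsub⟩ : ∃ C : Set L, IsCompact C ∧ Cᶜ ⊆ {t | ‖f₀ t‖ < δ} := by
    have h1 : Filter.Tendsto (fun t => ‖f₀ t‖) (Filter.cocompact L) (𝓝 0) := by
      simpa using f₀.zero_at_infty'.norm
    have h2 : (fun t => ‖f₀ t‖) ⁻¹' Set.Iio δ ∈ Filter.cocompact L := h1 (Iio_mem_nhds hδpos)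
    obtain ⟨C, hC, hCsub⟩ := Filter.mem_cocompact.mp h2
    exact ⟨C, hC, hCsub⟩
  have hKclosed : IsClosed K :=
    isClosed_le continuous_const ((map_continuous f₀).norm)
  have hK : IsCompact K := by
    refine hC.of_isClosed_subset hKclosed fun t ht => ?_
    by_contra hct
    have h3 := hCsub hct
    simp only [Set.mem_setOf_eq] at h3
    exact absurd h3 (not_lt.mpr ht)
  -- Urysohn function
  obtain ⟨φ, hφ1, -, hφcs, hφ01⟩ :=
    exists_continuous_one_zero_of_isCompact hK isClosed_empty (disjoint_empty K)
  have hφb : ∀ t, ‖φ t‖ ≤ 1 := fun t => by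
    rw [Real.norm_eq_abs, abs_of_nonneg (hφ01 t).1]; exact (hφ01 t).2
  set ψ : C(L, ℝ) := (1 : C(L, ℝ)) - φ with hψdef
  have hψb : ∀ t, ‖ψ t‖ ≤ 1 := fun t => by
    have := hφ01 t
    rw [hψdef]
    simp only [ContinuousMap.sub_apply, ContinuousMap.one_apply, Real.norm_eq_abs]
    rw [abs_of_nonneg (by linarith [this.2])]
    linarith [this.1]
  refine ⟨φ, hφcs, fun t => ⟨(hφ01 t).1, (hφ01 t).2⟩,
    ℓ.comp (mulCLM φ hφb), fun f => ⟨mulCLM φ hφb f, fun t => rfl, rfl⟩, ?_⟩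
  -- key estimate on the unit sphere
  have key : ∀ f : C₀(L, Y), ‖f‖ ≤ 1 → ℓ (mul ψ hψb f) ≤ δ := by
    intro f hf
    set h : C₀(L, Y) := f₀ + δ • mul ψ hψb f with hhdef
    have hmf : ∀ t, ‖mul ψ hψb f t‖ ≤ 1 := fun t => by
      rw [mul_apply, norm_smul]
      calc ‖ψ t‖ * ‖f t‖ ≤ 1 * 1 :=
            mul_le_mul (hψb t) ((norm_apply_le f t).trans hf) (norm_nonneg _) one_pos.le
        _ = 1 := one_mul 1
    have hh : ‖h‖ ≤ 1 := by
      refine norm_le' h one_pos.le fun t => ?_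
      rw [hhdef]
      by_cases ht : t ∈ K
      · have h1 : φ t = 1 := hφ1 ht
        have : mul ψ hψb f t = 0 := by
          rw [mul_apply, hψdef]
          simp [h1]
        simp only [ZeroAtInftyContinuousMap.add_apply, ZeroAtInftyContinuousMap.smul_apply,
          this, smul_zero, add_zero]
        exact (norm_apply_le f₀ t).trans hf₀norm
      · have h1 : ‖f₀ t‖ < δ := lt_of_not_ge ht
        calc ‖(f₀ + δ • mul ψ hψb f) t‖
            ≤ ‖f₀ t‖ + ‖(δ • mul ψ hψb f) t‖ := by
              rw [ZeroAtInftyContinuousMap.add_apply]; exact norm_add_le _ _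
          _ ≤ δ + δ * 1 := by
              rw [ZeroAtInftyContinuousMap.smul_apply, norm_smul, Real.norm_eq_abs,
                abs_of_nonneg hδpos.le]
              exact add_le_add h1.le (mul_le_mul_of_nonneg_left (hmf t) hδpos.le)
          _ ≤ 1 := by linarith
    have hlh : ℓ h ≤ ‖ℓ‖ := by
      calc ℓ h ≤ |ℓ h| := le_abs_self _
        _ ≤ ‖ℓ‖ * ‖h‖ := ℓ.le_opNorm h
        _ ≤ ‖ℓ‖ * 1 := mul_le_mul_of_nonneg_left hh (ContinuousLinearMap.opNorm_nonneg ℓ)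
        _ = ‖ℓ‖ := mul_one _
    have hexp : ℓ h = ℓ f₀ + δ * ℓ (mul ψ hψb f) := by
      rw [hhdef, map_add, map_smul, smul_eq_mul]
    nlinarith [hf₀, hlh, hexp]
  have keyabs : ∀ f : C₀(L, Y), ‖f‖ = 1 → |ℓ (mul ψ hψb f)| ≤ δ := by
    intro f hf
    rw [abs_le]
    constructor
    · have hneg : mul ψ hψb (-f) = -(mul ψ hψb f) := by
        ext t; simp [mul_apply]
      have := key (-f) (by rw [norm_neg, hf])
      rw [hneg, map_neg] at this
      linarith
    · exact key f hf.le
  refine le_trans (ContinuousLinearMap.opNorm_le_of_unit_norm hδpos.le fun f hf => ?_) hδε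
  have hsub : f - mulCLM φ hφb f = mul ψ hψb f := by
    ext t
    simp only [ZeroAtInftyContinuousMap.sub_apply, mulCLM_apply, mul_apply, hψdef,
      ContinuousMap.sub_apply, ContinuousMap.one_apply, sub_smul, one_smul]
  calc ‖(ℓ - ℓ.comp (mulCLM φ hφb)) f‖ = |ℓ (f - mulCLM φ hφb f)| := by
        rw [ContinuousLinearMap.sub_apply, ContinuousLinearMap.comp_apply, ← map_sub,
          Real.norm_eq_abs]
    _ = |ℓ (mul ψ hψb f)| := by rw [hsub]
    _ ≤ δ := keyabs f hf
end

section
/- Let Γ be an uncountable set and let X be a reflexive real Banach space (i.e., the canonical embedding of X into its bidual X** is surjective). Then there is no injective bounded linear operator from c₀(Γ) into X. -/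
/-!
Write `x γ = j (single γ)`. Testing `j` on signed finite sums of unit vectors gives
`∑ γ, |ψ (x γ)| ≤ ‖j‖ ‖ψ‖` for every functional `ψ`, and if `j` is injective then uncountably
many `x γ` have norm at least some `ε > 0`. Choose norming functionals `φ γ`. Every row
`φ γ (x ·)` is absolutely summable, hence countably supported, and uncountability lets one
extract a sequence `g n` with `φ (g m) (x (g n)) = 0` and `|φ (g n) (x (g m))| ≤ ε / 4 / 2 ^ m`
for `m < n`. Reflexivity realises the weakly summable tails `∑_{k ≥ N} x (g k)` as vectors `v N`.
A weak-* cluster point `Λ` of the `φ (g n)` then has `Λ (v N) ≥ ε / 2` for every `N`, although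
`Λ (v N)` is the tail of a convergent series.
-/

open scoped ZeroAtInfty NNReal
open Filter Topology Function

namespace ZeroAtInftyContinuousMap

theorem coe_finset_sum {α β ι : Type*} [TopologicalSpace α] [TopologicalSpace β]
    [AddCommMonoid β] [ContinuousAdd β] (F : Finset ι) (f : ι → C₀(α, β)) :
    ⇑(∑ i ∈ F, f i) = ∑ i ∈ F, ⇑(f i) :=
  map_sum (⟨⟨DFunLike.coe, coe_zero⟩, coe_add⟩ : C₀(α, β) →+ α → β) f F

variable {Γ : Type*} [TopologicalSpace Γ] [DiscreteTopology Γ]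

noncomputable def single (γ : Γ) : C₀(Γ, ℝ) where
  toFun := ({γ} : Set Γ).indicator 1
  continuous_toFun := continuous_of_discreteTopology
  zero_at_infty' := by
    rw [cocompact_eq_cofinite]
    exact tendsto_const_nhds.congr' <| (Set.finite_singleton γ).eventually_cofinite_notMem.mono
      fun _ hγ' => (Set.indicator_of_notMem hγ' 1).symm

theorem single_apply (γ γ' : Γ) : single γ γ' = ({γ} : Set Γ).indicator 1 γ' := rfl

theorem single_ne_zero (γ : Γ) : single γ ≠ 0 := fun h => by
  simpa [single_apply] using congr($h γ)

theorem norm_sum_smul_single_le {F : Finset Γ} {s : Γ → ℝ} (hs : ∀ γ ∈ F, |s γ| ≤ 1) :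
    ‖∑ γ ∈ F, s γ • single γ‖ ≤ 1 := by
  classical
  rw [← norm_toBCF_eq_norm]
  refine (BoundedContinuousFunction.norm_le zero_le_one).2 fun γ' => ?_
  change ‖(∑ γ ∈ F, s γ • single γ) γ'‖ ≤ 1
  simp only [coe_finset_sum, coe_smul, Finset.sum_apply, Pi.smul_apply, single_apply,
    Set.indicator_apply, Set.mem_singleton_iff, Pi.one_apply, smul_eq_mul, mul_ite, mul_one,
    mul_zero, Finset.sum_ite_eq]
  split_ifs with h
  exacts [hs γ' h, by simp]

theorem sum_abs_apply_single_le (μ : StrongDual ℝ C₀(Γ, ℝ)) (F : Finset Γ) :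
    ∑ γ ∈ F, |μ (single γ)| ≤ ‖μ‖ := by
  set w := ∑ γ ∈ F, (SignType.sign (μ (single γ)) : ℝ) • single γ
  have hw : ‖w‖ ≤ 1 := norm_sum_smul_single_le fun γ _ => by
    cases SignType.sign (μ (single γ)) <;> simp
  calc ∑ γ ∈ F, |μ (single γ)| = μ w := by simp [w, map_sum, sign_mul_self]
    _ ≤ ‖μ‖ * ‖w‖ := (le_abs_self _).trans (μ.le_opNorm w)
    _ ≤ ‖μ‖ := mul_le_of_le_one_right (norm_nonneg μ) hw

end ZeroAtInftyContinuousMap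

open ZeroAtInftyContinuousMap

theorem half_le_tsum_nat_add {a : ℕ → ℝ} (ha : Summable a) {ε : ℝ} (hε : 0 ≤ ε) {n N : ℕ}
    (hN : N ≤ n) (hn : ε ≤ a n) (hlt : ∀ k < n, |a k| ≤ ε / 4 / 2 ^ k)
    (hgt : ∀ k, n < k → a k = 0) : ε / 2 ≤ ∑' k, a (k + N) := by
  have hquarter : ∀ k : ℕ, ε / 2 / 2 / 2 ^ k = ε / 4 / 2 ^ k := fun k => by ring
  have hgeom : Summable fun k : ℕ => ε / 4 / 2 ^ k :=
    (summable_geometric_two' (ε / 2)).congr hquarter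
  have hpeak : Summable fun k => if k = n - N then ε else 0 :=
    summable_of_ne_finset_zero (s := {n - N}) (by simp_all)
  have hterm : ∀ k, (if k = n - N then ε else 0) - ε / 4 / 2 ^ k ≤ a (k + N) := by
    intro k
    have hk : 0 ≤ ε / 4 / 2 ^ k := by positivity
    rcases lt_trichotomy (k + N) n with h | h | h
    · have : ε / 4 / 2 ^ (k + N) ≤ ε / 4 / 2 ^ k := div_le_div_of_nonneg_left (by positivity)
        (by positivity) (pow_le_pow_right₀ one_le_two (by omega))
      rw [if_neg (by omega)]
      linarith [neg_abs_le (a (k + N)), hlt _ h]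
    · rw [if_pos (by omega), h]
      linarith
    · rw [if_neg (by omega), hgt _ h]
      linarith
  calc ε / 2 = ∑' k, (if k = n - N then ε else 0) - ∑' k : ℕ, ε / 4 / 2 ^ k := by
        rw [tsum_ite_eq, ← tsum_congr hquarter, tsum_geometric_two']
        ring
    _ = ∑' k, ((if k = n - N then ε else 0) - ε / 4 / 2 ^ k) := (hpeak.tsum_sub hgeom).symm
    _ ≤ ∑' k, a (k + N) := (hpeak.sub hgeom).tsum_le_tsum hterm ((summable_nat_add_iff N).2 ha)

section TriangularSequence

variable {ι : Type*} {f : ι → ι → ℝ} {C : ℝ}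

theorem exists_not_countable_setOf_abs_le (hf : ∀ i (F : Finset ι), ∑ i' ∈ F, |f i i'| ≤ C)
    {δ : ℝ} (hδ : 0 < δ) {s : Set ι} (hs : ¬ s.Countable) :
    ∃ i' ∈ s, ¬ {i ∈ s | |f i i'| ≤ δ}.Countable := by
  by_contra! h
  obtain ⟨D, hDs, hD⟩ :=
    (show s.Infinite from fun hfin => hs hfin.countable).exists_subset_card_eq (⌈C / δ⌉₊ + 1)
  have hU : (⋃ i' ∈ D, {i ∈ s | |f i i'| ≤ δ}).Countable :=
    D.countable_toSet.biUnion fun i' hi' => h i' (hDs hi')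
  obtain ⟨i, his, hiU⟩ : (s \ ⋃ i' ∈ D, {i ∈ s | |f i i'| ≤ δ}).Nonempty :=
    Set.nonempty_iff_ne_empty.2 fun he => hs ((he ▸ Set.countable_empty).of_sdiff hU)
  have hbig : ∀ i' ∈ D, δ ≤ |f i i'| := fun i' hi' =>
    le_of_lt <| not_le.1 fun hle => hiU (Set.mem_biUnion hi' ⟨his, hle⟩)
  have hC : C < D.card * δ := by
    rw [hD, ← div_lt_iff₀ hδ]
    push_cast
    exact (Nat.le_ceil _).trans_lt (lt_add_one _)
  have hsum := Finset.card_nsmul_le_sum D (fun i' => |f i i'|) δ hbig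
  rw [nsmul_eq_mul] at hsum
  linarith [hf i D]

theorem exists_not_countable_triangular (hf : ∀ i (F : Finset ι), ∑ i' ∈ F, |f i i'| ≤ C)
    {δ : ℝ} (hδ : 0 < δ) {s : Set ι} (hs : ¬ s.Countable) :
    ∃ i' ∈ s, ¬ {i ∈ s | i ≠ i' ∧ |f i i'| ≤ δ ∧ f i' i = 0}.Countable := by
  obtain ⟨i', hi's, hi'⟩ := exists_not_countable_setOf_abs_le hf hδ hs
  refine ⟨i', hi's, fun hc => hi' ?_⟩
  have hsupp : (support (f i') ∪ {i'}).Countable :=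
    (summable_of_sum_le (fun _ => abs_nonneg _) (hf i')).of_abs.countable_support.union
      (Set.countable_singleton i')
  refine (hc.union hsupp).mono fun i ⟨his, hle⟩ => ?_
  by_cases hii' : i = i'
  · exact Or.inr (Or.inr hii')
  by_cases hfi : f i' i = 0
  · exact Or.inl ⟨his, hii', hle, hfi⟩
  · exact Or.inr (Or.inl hfi)

theorem exists_seq_triangular (hf : ∀ i (F : Finset ι), ∑ i' ∈ F, |f i i'| ≤ C)
    {δ : ℕ → ℝ} (hδ : ∀ n, 0 < δ n) {A : Set ι} (hA : ¬ A.Countable) :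
    ∃ g : ℕ → ι, (∀ n, g n ∈ A) ∧
      ∀ m n, m < n → g n ≠ g m ∧ |f (g n) (g m)| ≤ δ m ∧ f (g m) (g n) = 0 := by
  choose next hnext_mem hnext using fun n (s : {s : Set ι // ¬ s.Countable}) =>
    exists_not_countable_triangular hf (hδ n) s.2
  let S : ℕ → {s : Set ι // ¬ s.Countable} := fun n =>
    Nat.rec ⟨A, hA⟩ (fun n s => ⟨_, hnext n s⟩) n
  let g n := next n (S n)
  have hS_succ : ∀ n,
      (S (n + 1)).1 = {i ∈ (S n).1 | i ≠ g n ∧ |f i (g n)| ≤ δ n ∧ f (g n) i = 0} :=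
    fun n => rfl
  have hS_anti : Antitone fun n => (S n).1 :=
    antitone_nat_of_succ_le fun n => (hS_succ n).trans_subset (Set.sep_subset _ _)
  refine ⟨g, fun n => hS_anti n.zero_le (hnext_mem n (S n)), fun m n hmn => ?_⟩
  have hgn : g n ∈ (S (m + 1)).1 := hS_anti (Nat.succ_le_of_lt hmn) (hnext_mem n (S n))
  rw [hS_succ] at hgn
  exact hgn.2

end TriangularSequence

section WeaklySummable

variable {X : Type*} [NormedAddCommGroup X] [NormedSpace ℝ X] {ι κ : Type*}

/-- In Banach-space language: the series `∑ x i` is weakly unconditionally Cauchy. -/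
def WeaklySummableWith (C : ℝ≥0) (x : ι → X) : Prop :=
  ∀ (ψ : StrongDual ℝ X) (F : Finset ι), ∑ i ∈ F, |ψ (x i)| ≤ C * ‖ψ‖

theorem weaklySummableWith_single {Γ : Type*} [TopologicalSpace Γ] [DiscreteTopology Γ]
    (j : C₀(Γ, ℝ) →L[ℝ] X) : WeaklySummableWith ‖j‖₊ fun γ => j (single γ) := fun ψ F =>
  (sum_abs_apply_single_le (ψ.comp j) F).trans <| by
    simpa only [coe_nnnorm, mul_comm] using ψ.opNorm_comp_le j

/-- `Λ` is a weak-* cluster point of `u`, provided by the Banach–Alaoglu theorem. -/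
theorem StrongDual.exists_le_of_eventually_le {l : Filter ι} [l.NeBot]
    {u : ι → StrongDual ℝ X} {R : ℝ} (hu : ∀ i, ‖u i‖ ≤ R) :
    ∃ Λ : StrongDual ℝ X, ∀ v r, (∀ᶠ i in l, r ≤ u i v) → r ≤ Λ v := by
  obtain ⟨Λ, -, hΛ⟩ :=
    (WeakDual.isCompact_closedBall (0 : StrongDual ℝ X) R).exists_mapClusterPt
      (u := fun i => StrongDual.toWeakDual (u i)) (f := l)
      (le_principal_iff.2 (mem_map.2 (univ_mem' fun i => by simpa using hu i)))
  refine ⟨WeakDual.toStrongDual Λ, fun v r hr => ?_⟩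
  exact isClosed_Ici.mem_of_mapClusterPt
    (hΛ.continuousAt_comp (WeakDual.eval_continuous v).continuousAt) hr

namespace WeaklySummableWith

variable {C : ℝ≥0} {x : ι → X}

theorem comp_injective (hx : WeaklySummableWith C x) {g : κ → ι} (hg : Injective g) :
    WeaklySummableWith C (x ∘ g) := fun ψ F => by
  simpa only [Finset.sum_map, Embedding.coeFn_mk, comp_apply] using hx ψ (F.map ⟨g, hg⟩)

theorem summable_abs (hx : WeaklySummableWith C x) (ψ : StrongDual ℝ X) :
    Summable fun i => |ψ (x i)| :=
  summable_of_sum_le (fun _ => abs_nonneg _) (hx ψ)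

theorem abs_tsum_le (hx : WeaklySummableWith C x) (ψ : StrongDual ℝ X) :
    |∑' i, ψ (x i)| ≤ C * ‖ψ‖ :=
  calc |∑' i, ψ (x i)| ≤ ∑' i, |ψ (x i)| :=
        norm_tsum_le_tsum_norm (f := fun i => ψ (x i)) (hx.summable_abs ψ)
    _ ≤ C * ‖ψ‖ := (hx.summable_abs ψ).tsum_le_of_sum_le (hx ψ)

theorem exists_weak_tsum (hrefl : Surjective (NormedSpace.inclusionInDoubleDual ℝ X))
    (hx : WeaklySummableWith C x) : ∃ v : X, ∀ ψ : StrongDual ℝ X, ψ v = ∑' i, ψ (x i) := by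
  let Φ : StrongDual ℝ (StrongDual ℝ X) := LinearMap.mkContinuous
    { toFun := fun ψ => ∑' i, ψ (x i)
      map_add' := fun ψ₁ ψ₂ => (hx.summable_abs ψ₁).of_abs.tsum_add (hx.summable_abs ψ₂).of_abs
      map_smul' := fun c ψ => tsum_mul_left } C fun ψ => hx.abs_tsum_le ψ
  obtain ⟨v, hv⟩ := hrefl Φ
  exact ⟨v, fun ψ => congr($hv ψ)⟩

theorem nonpos_of_almost_biorthogonal
    (hrefl : Surjective (NormedSpace.inclusionInDoubleDual ℝ X))
    {b : ℕ → X} (hb : WeaklySummableWith C b) {u : ℕ → StrongDual ℝ X} (hu : ∀ n, ‖u n‖ ≤ 1)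
    {ε : ℝ} (hdiag : ∀ n, ε ≤ u n (b n)) (hlt : ∀ m n, m < n → |u n (b m)| ≤ ε / 4 / 2 ^ m)
    (hgt : ∀ m n, m < n → u m (b n) = 0) : ε ≤ 0 := by
  by_contra! hε
  choose v hv using fun N => (hb.comp_injective (add_left_injective N)).exists_weak_tsum hrefl
  obtain ⟨Λ, hΛ⟩ := StrongDual.exists_le_of_eventually_le (l := atTop) hu
  have hlow : ∀ N, ε / 2 ≤ Λ (v N) := fun N => hΛ _ _ <| eventually_atTop.2 ⟨N, fun n hn => by
    rw [hv]
    exact half_le_tsum_nat_add (hb.summable_abs (u n)).of_abs hε.le hn (hdiag n)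
      (fun k hk => hlt k n hk) (fun k hk => hgt n k hk)⟩
  have hzero : Tendsto (fun N => Λ (v N)) atTop (𝓝 0) := by
    simpa only [hv, comp_apply] using tendsto_sum_nat_add fun k => Λ (b k)
  obtain ⟨N, hN⟩ := (hzero.eventually_lt_const (half_pos hε)).exists
  exact hN.not_ge (hlow N)

theorem countable_setOf_le_norm (hrefl : Surjective (NormedSpace.inclusionInDoubleDual ℝ X))
    (hx : WeaklySummableWith C x) {ε : ℝ} (hε : 0 < ε) : {i | ε ≤ ‖x i‖}.Countable := by
  by_contra hA
  choose φ hφ1 hφx using fun i => exists_dual_vector'' ℝ (x i)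
  have hrow : ∀ i (F : Finset ι), ∑ i' ∈ F, |φ i (x i')| ≤ C := fun i F =>
    (hx (φ i) F).trans (mul_le_of_le_one_right C.2 (hφ1 i))
  obtain ⟨g, hgA, hg⟩ :=
    exists_seq_triangular hrow (δ := fun m => ε / 4 / 2 ^ m) (fun m => by positivity) hA
  have hg_inj : Injective g := .of_lt_imp_ne fun m n hmn => (hg m n hmn).1.symm
  refine hε.not_ge <| (hx.comp_injective hg_inj).nonpos_of_almost_biorthogonal hrefl
    (u := fun n => φ (g n)) (fun n => hφ1 _) (fun n => (hgA n).trans_eq (hφx _).symm)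
    (fun m n hmn => (hg m n hmn).2.1) (fun m n hmn => (hg m n hmn).2.2)

end WeaklySummableWith

end WeaklySummable

theorem no_injective_operator_c0_into_reflexive_general {Γ X : Type*}
    [TopologicalSpace Γ] [DiscreteTopology Γ] [Uncountable Γ]
    [NormedAddCommGroup X] [NormedSpace ℝ X]
    (hrefl : Function.Surjective (NormedSpace.inclusionInDoubleDual ℝ X)) :
    ¬ ∃ j : C₀(Γ, ℝ) →L[ℝ] X, Function.Injective j := by
  rintro ⟨j, hj⟩
  have hx := weaklySummableWith_single j
  have hcover : (Set.univ : Set Γ) ⊆ ⋃ n : ℕ, {γ | 1 / (n + 1 : ℝ) ≤ ‖j (single γ)‖} :=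
    fun γ _ => by
      have hpos : 0 < ‖j (single γ)‖ :=
        norm_pos_iff.2 ((map_ne_zero_iff j hj).2 (single_ne_zero γ))
      obtain ⟨n, hn⟩ := exists_nat_one_div_lt hpos
      exact Set.mem_iUnion.2 ⟨n, hn.le⟩
  exact Set.not_countable_univ <|
    (Set.countable_iUnion fun n => hx.countable_setOf_le_norm hrefl (by positivity)).mono hcover

/-- There is no injective bounded linear operator from `c₀(Γ)`, `Γ` uncountable
(realized as `C₀(Γ, ℝ)` for `Γ` discrete), into a reflexive Banach space `X`. -/
theorem no_injective_operator_c0_into_reflexive {Γ X : Type*}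
    [TopologicalSpace Γ] [DiscreteTopology Γ] [Uncountable Γ]
    [NormedAddCommGroup X] [NormedSpace ℝ X] [CompleteSpace X]
    (hrefl : Function.Surjective (NormedSpace.inclusionInDoubleDual ℝ X)) :
    ¬ ∃ j : C₀(Γ, ℝ) →L[ℝ] X, Function.Injective j :=
  no_injective_operator_c0_into_reflexive_general hrefl
end
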